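/- arXiv:1906.08253 — 3 statements merged into one kernel-verified Lean document; each statement's English description precedes it below -/
import Mathlib

section
/- Let S and A be finite nonempty sets, let p and p̂ be two dynamics kernels on S×A, let π_D and π be two policies, let ρ0 be a common initial state distribution, let r be a reward function bounded in absolute value by r_max ≥ 0, and let γ ∈ (0,1) be a discount factor. Suppose (i) for every timestep t, the expectation over (s,a) drawn from the time-t state-action marginal of π_D under the true dynamics p of TV(p(·|s,a), p̂(·|s,a)) is at most ε_m, and (ii) max_s TV(π_D(·|s), π(·|s)) ≤ ε_π. Then the return of π under the true dynamics p and the return of π under the model p̂ satisfy η[π] ≥ η̂[π] − [ 2γ·r_max·(ε_m + 2ε_π)/(1−γ)² + 4·r_max·ε_π/(1−γ) ]. -/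
open scoped BigOperators

/-- Total variation distance between two probability mass functions on a finite type. -/
noncomputable def tv {X : Type*} [Fintype X] (q1 q2 : PMF X) : ℝ :=
  (1 / 2) * ∑ x, |(q1 x).toReal - (q2 x).toReal|

/-- Total variation distance between two real-valued distributions on a finite type. -/
noncomputable def tvFun {X : Type*} [Fintype X] (d1 d2 : X → ℝ) : ℝ :=
  (1 / 2) * ∑ x, |d1 x - d2 x|

/-- Time-`t` state-action marginal of a (possibly time-varying) policy/dynamics pair,
started from initial state distribution `ρ0`:  `d⁰(s,a) = ρ0(s)·π₀(a|s)` and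
`d^{t+1}(s,a) = Σ_{s',a'} d^t(s',a')·p_t(s|s',a')·π_{t+1}(a|s)`. -/
noncomputable def marginal {S A : Type*} [Fintype S] [Fintype A]
    (ρ0 : PMF S) (πseq : ℕ → S → PMF A) (pseq : ℕ → S × A → PMF S) :
    ℕ → S × A → ℝ
  | 0 => fun sa => (ρ0 sa.1).toReal * ((πseq 0 sa.1) sa.2).toReal
  | t + 1 => fun sa =>
      ∑ s' : S, ∑ a' : A,
        marginal ρ0 πseq pseq t (s', a') * ((pseq t (s', a')) sa.1).toReal *
          ((πseq (t + 1) sa.1) sa.2).toReal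

/-- Discounted return `η = Σ_t γ^t Σ_{s,a} d^t(s,a)·r(s,a)`. -/
noncomputable def ret {S A : Type*} [Fintype S] [Fintype A]
    (γ : ℝ) (r : S × A → ℝ) (d : ℕ → S × A → ℝ) : ℝ :=
  ∑' t : ℕ, γ ^ t * ∑ sa : S × A, d t sa * r sa

/-
Each chain of state-action marginals is obtained from the previous one by pushing it through the
dynamics and then through the policy, and both operations are `1`-Lipschitz in total variation up
to an additive error: the expected TV gap between the two dynamics, resp. the worst-case TV gap
between the two policies. Hence the marginals of two chains drift apart at most linearly in `t`.
Comparing `(π, p̂)` with `(π, p)` through the intermediate chains `(π_D, p̂)` and `(π_D, p)`, where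
the model error is measured, gives `TV(d̂ᵗ, dᵗ) ≤ 2ε_π + (2ε_π + ε_m) t`; a reward bounded by
`r_max` changes by at most `2 r_max` times this, and summing against `γᵗ` and `t γᵗ` gives the bound.
-/

open Finset

section TotalVariation

variable {X : Type*} [Fintype X]

theorem PMF.sum_toReal (q : PMF X) : ∑ x, (q x).toReal = 1 := by
  rw [← ENNReal.toReal_sum fun x _ => q.apply_ne_top x, ← tsum_fintype (L := .unconditional _),
    q.tsum_coe, ENNReal.toReal_one]

theorem sum_abs_sub_toReal (q₁ q₂ : PMF X) :
    ∑ x, |(q₁ x).toReal - (q₂ x).toReal| = 2 * tv q₁ q₂ := by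
  rw [tv]; ring

theorem tv_self (q : PMF X) : tv q q = 0 := by simp [tv]

theorem tv_comm (q₁ q₂ : PMF X) : tv q₁ q₂ = tv q₂ q₁ := by
  simp only [tv, abs_sub_comm]

theorem tvFun_self (f : X → ℝ) : tvFun f f = 0 := by simp [tvFun]

theorem tvFun_comm (f g : X → ℝ) : tvFun f g = tvFun g f := by
  simp only [tvFun, abs_sub_comm]

theorem tvFun_triangle (f g h : X → ℝ) : tvFun f h ≤ tvFun f g + tvFun g h := by
  simp only [tvFun, ← mul_add, ← sum_add_distrib]
  gcongr with x
  exact abs_sub_le _ _ _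

theorem sum_mul_le_of_le {μ g : X → ℝ} {c : ℝ} (hμ : 0 ≤ μ) (hμ₁ : ∑ x, μ x = 1)
    (hg : ∀ x, g x ≤ c) : ∑ x, μ x * g x ≤ c :=
  calc ∑ x, μ x * g x ≤ ∑ x, μ x * c :=
        sum_le_sum fun x _ => mul_le_mul_of_nonneg_left (hg x) (hμ x)
    _ = c := by rw [← sum_mul, hμ₁, one_mul]

theorem abs_sum_mul_le_of_abs_le {d r : X → ℝ} {rmax : ℝ} (hd : 0 ≤ d) (hd₁ : ∑ x, d x = 1)
    (hr : ∀ x, |r x| ≤ rmax) : |∑ x, d x * r x| ≤ rmax :=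
  calc |∑ x, d x * r x| ≤ ∑ x, d x * |r x| := by
        refine (abs_sum_le_sum_abs _ _).trans_eq (sum_congr rfl fun x _ => ?_)
        rw [abs_mul, abs_of_nonneg (hd x)]
    _ ≤ rmax := sum_mul_le_of_le hd hd₁ hr

theorem sum_mul_sub_sum_mul_le (d₁ d₂ : X → ℝ) {r : X → ℝ} {rmax : ℝ}
    (hr : ∀ x, |r x| ≤ rmax) :
    ∑ x, d₁ x * r x - ∑ x, d₂ x * r x ≤ 2 * rmax * tvFun d₁ d₂ :=
  calc ∑ x, d₁ x * r x - ∑ x, d₂ x * r x = ∑ x, (d₁ x - d₂ x) * r x := by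
        rw [← sum_sub_distrib]
        exact sum_congr rfl fun x _ => (sub_mul _ _ _).symm
    _ ≤ ∑ x, |d₁ x - d₂ x| * rmax := sum_le_sum fun x _ =>
        (le_abs_self _).trans_eq (abs_mul _ _) |>.trans
          (mul_le_mul_of_nonneg_left (hr x) (abs_nonneg _))
    _ = 2 * rmax * tvFun d₁ d₂ := by
        rw [tvFun, ← sum_mul]; ring

end TotalVariation

section Kernels

variable {X Y : Type*}

-- Signed-weight analogues of `MeasureTheory.Measure.compProd` and `MeasureTheory.Measure.bind`.
def compProdFun (μ : X → ℝ) (κ : X → PMF Y) : X × Y → ℝ :=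
  fun xy => μ xy.1 * (κ xy.1 xy.2).toReal

variable {μ ν : X → ℝ} {κ τ : X → PMF Y}

theorem compProdFun_nonneg (hμ : 0 ≤ μ) : 0 ≤ compProdFun μ κ :=
  fun _ => mul_nonneg (hμ _) ENNReal.toReal_nonneg

variable [Fintype X]

def bindFun (μ : X → ℝ) (κ : X → PMF Y) : Y → ℝ :=
  fun y => ∑ x, μ x * (κ x y).toReal

theorem bindFun_nonneg (hμ : 0 ≤ μ) : 0 ≤ bindFun μ κ :=
  fun _ => sum_nonneg fun _ _ => mul_nonneg (hμ _) ENNReal.toReal_nonneg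

variable [Fintype Y]

theorem sum_compProdFun : ∑ xy, compProdFun μ κ xy = ∑ x, μ x := by
  simp only [compProdFun, Fintype.sum_prod_type, ← mul_sum, PMF.sum_toReal, mul_one]

theorem sum_bindFun : ∑ y, bindFun μ κ y = ∑ x, μ x := by
  simp only [bindFun]
  rw [sum_comm]
  simp only [← mul_sum, PMF.sum_toReal, mul_one]

theorem tvFun_compProdFun_le (hμ : 0 ≤ μ) :
    tvFun (compProdFun μ κ) (compProdFun ν τ) ≤ tvFun μ ν + ∑ x, μ x * tv (κ x) (τ x) := by
  have hsplit : ∀ x y, |μ x * (κ x y).toReal - ν x * (τ x y).toReal| ≤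
      |μ x - ν x| * (τ x y).toReal + μ x * |(κ x y).toReal - (τ x y).toReal| := by
    intro x y
    calc |μ x * (κ x y).toReal - ν x * (τ x y).toReal|
        = |(μ x - ν x) * (τ x y).toReal + μ x * ((κ x y).toReal - (τ x y).toReal)| := by
          congr 1; ring
      _ ≤ _ := by
          refine (abs_add_le _ _).trans_eq ?_
          rw [abs_mul, abs_mul, abs_of_nonneg ENNReal.toReal_nonneg, abs_of_nonneg (hμ x)]
  calc tvFun (compProdFun μ κ) (compProdFun ν τ)
      = 1 / 2 * ∑ x, ∑ y, |μ x * (κ x y).toReal - ν x * (τ x y).toReal| := by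
        rw [tvFun, Fintype.sum_prod_type]; rfl
    _ ≤ 1 / 2 * ∑ x, ∑ y,
          (|μ x - ν x| * (τ x y).toReal + μ x * |(κ x y).toReal - (τ x y).toReal|) := by
        gcongr with x _ y _
        exact hsplit x y
    _ = 1 / 2 * ∑ x, (|μ x - ν x| + μ x * (2 * tv (κ x) (τ x))) := by
        simp only [sum_add_distrib, ← mul_sum, PMF.sum_toReal, sum_abs_sub_toReal, mul_one]
    _ = tvFun μ ν + ∑ x, μ x * tv (κ x) (τ x) := by
        rw [tvFun, sum_add_distrib, mul_add, mul_sum, mul_sum]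
        congr 1
        exact sum_congr rfl fun x _ => by ring

theorem tvFun_sum_fst_le (g h : X × Y → ℝ) :
    tvFun (fun y => ∑ x, g (x, y)) (fun y => ∑ x, h (x, y)) ≤ tvFun g h := by
  rw [tvFun, tvFun, Fintype.sum_prod_type_right]
  gcongr with y
  rw [← sum_sub_distrib]
  exact abs_sum_le_sum_abs _ _

theorem tvFun_bindFun_le (hμ : 0 ≤ μ) :
    tvFun (bindFun μ κ) (bindFun ν τ) ≤ tvFun μ ν + ∑ x, μ x * tv (κ x) (τ x) :=
  (tvFun_sum_fst_le (compProdFun μ κ) (compProdFun ν τ)).trans (tvFun_compProdFun_le hμ)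

end Kernels

section Marginal

variable {S A : Type*} [Fintype S] [Fintype A] (ρ0 : PMF S)

theorem marginal_zero (πs : ℕ → S → PMF A) (ps : ℕ → S × A → PMF S) :
    marginal ρ0 πs ps 0 = compProdFun (fun s => (ρ0 s).toReal) (πs 0) :=
  rfl

theorem marginal_succ (πs : ℕ → S → PMF A) (ps : ℕ → S × A → PMF S) (t : ℕ) :
    marginal ρ0 πs ps (t + 1) =
      compProdFun (bindFun (marginal ρ0 πs ps t) (ps t)) (πs (t + 1)) := by
  funext sa
  simp only [marginal, compProdFun, bindFun, Fintype.sum_prod_type, sum_mul]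

theorem marginal_nonneg (πs : ℕ → S → PMF A) (ps : ℕ → S × A → PMF S) (t : ℕ) :
    0 ≤ marginal ρ0 πs ps t := by
  induction t with
  | zero => exact compProdFun_nonneg fun _ => ENNReal.toReal_nonneg
  | succ t ih => rw [marginal_succ]; exact compProdFun_nonneg (bindFun_nonneg ih)

theorem sum_marginal (πs : ℕ → S → PMF A) (ps : ℕ → S × A → PMF S) (t : ℕ) :
    ∑ sa, marginal ρ0 πs ps t sa = 1 := by
  induction t with
  | zero => rw [marginal_zero, sum_compProdFun, PMF.sum_toReal]
  | succ t ih => rw [marginal_succ, sum_compProdFun, sum_bindFun, ih]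

theorem tvFun_marginal_le {π₁ π₂ : ℕ → S → PMF A} {p₁ p₂ : ℕ → S × A → PMF S} {επ εm : ℝ}
    (hπ : ∀ t s, tv (π₁ t s) (π₂ t s) ≤ επ)
    (hp : ∀ t, ∑ sa, marginal ρ0 π₁ p₁ t sa * tv (p₁ t sa) (p₂ t sa) ≤ εm) (t : ℕ) :
    tvFun (marginal ρ0 π₁ p₁ t) (marginal ρ0 π₂ p₂ t) ≤ (t + 1) * επ + t * εm := by
  induction t with
  | zero =>
    have hρ : 0 ≤ fun s => (ρ0 s).toReal := fun _ => ENNReal.toReal_nonneg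
    rw [marginal_zero, marginal_zero]
    calc _ ≤ _ := tvFun_compProdFun_le hρ
      _ ≤ _ := by
        rw [tvFun_self]
        push_cast
        linarith [sum_mul_le_of_le hρ (PMF.sum_toReal ρ0) (hπ 0)]
  | succ t ih =>
    have hd := marginal_nonneg ρ0 π₁ p₁ t
    have hπavg := sum_mul_le_of_le (bindFun_nonneg (κ := p₁ t) hd)
      (by rw [sum_bindFun, sum_marginal]) (hπ (t + 1))
    rw [marginal_succ, marginal_succ]
    calc _ ≤ _ := tvFun_compProdFun_le (bindFun_nonneg hd)
      _ ≤ tvFun (marginal ρ0 π₁ p₁ t) (marginal ρ0 π₂ p₂ t)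
            + ∑ sa, marginal ρ0 π₁ p₁ t sa * tv (p₁ t sa) (p₂ t sa) + επ :=
        add_le_add (tvFun_bindFun_le hd) hπavg
      _ ≤ _ := by push_cast; linarith [hp t]

end Marginal

section DiscountedReturn

variable {S A : Type*} [Fintype S] [Fintype A] {r : S × A → ℝ} {rmax γ : ℝ}
  {d d₁ d₂ : ℕ → S × A → ℝ}

theorem summable_discounted_expectation (hγ₀ : 0 ≤ γ) (hγ₁ : γ < 1) (hd : ∀ t, 0 ≤ d t)
    (hd₁ : ∀ t, ∑ x, d t x = 1) (hr : ∀ x, |r x| ≤ rmax) :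
    Summable fun t => γ ^ t * ∑ x, d t x * r x := by
  refine .of_norm_bounded ((summable_geometric_of_lt_one hγ₀ hγ₁).mul_left rmax) fun t => ?_
  rw [Real.norm_eq_abs, abs_mul, abs_of_nonneg (pow_nonneg hγ₀ t), mul_comm]
  exact mul_le_mul_of_nonneg_right (abs_sum_mul_le_of_abs_le (hd t) (hd₁ t) hr)
    (pow_nonneg hγ₀ t)

theorem ret_sub_ret_le (hγ₀ : 0 ≤ γ) (hγ₁ : γ < 1) (hrmax : 0 ≤ rmax)
    (hr : ∀ x, |r x| ≤ rmax) (hd₁ : ∀ t, 0 ≤ d₁ t) (hd₁₁ : ∀ t, ∑ x, d₁ t x = 1)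
    (hd₂ : ∀ t, 0 ≤ d₂ t) (hd₂₁ : ∀ t, ∑ x, d₂ t x = 1) {a b : ℝ}
    (htv : ∀ t : ℕ, tvFun (d₁ t) (d₂ t) ≤ a + b * t) :
    ret γ r d₁ - ret γ r d₂ ≤ 2 * rmax * (a / (1 - γ) + b * γ / (1 - γ) ^ 2) := by
  have hγ : ‖γ‖ < 1 := by rwa [Real.norm_eq_abs, abs_of_nonneg hγ₀]
  have hbound : HasSum (fun t : ℕ => 2 * rmax * (a * γ ^ t + b * (t * γ ^ t)))
      (2 * rmax * (a / (1 - γ) + b * γ / (1 - γ) ^ 2)) := by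
    rw [div_eq_mul_inv, mul_div_assoc]
    exact (((hasSum_geometric_of_lt_one hγ₀ hγ₁).mul_left a).add
      ((hasSum_coe_mul_geometric_of_norm_lt_one hγ).mul_left b)).mul_left (2 * rmax)
  have hterm (t : ℕ) : γ ^ t * ∑ x, d₁ t x * r x - γ ^ t * ∑ x, d₂ t x * r x ≤
      2 * rmax * (a * γ ^ t + b * (t * γ ^ t)) :=
    calc γ ^ t * ∑ x, d₁ t x * r x - γ ^ t * ∑ x, d₂ t x * r x
        = γ ^ t * (∑ x, d₁ t x * r x - ∑ x, d₂ t x * r x) := by ring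
      _ ≤ γ ^ t * (2 * rmax * (a + b * t)) := by
        gcongr
        exact (sum_mul_sub_sum_mul_le _ _ hr).trans (by gcongr; exact htv t)
      _ = _ := by ring
  have hs₁ := summable_discounted_expectation hγ₀ hγ₁ hd₁ hd₁₁ hr
  have hs₂ := summable_discounted_expectation hγ₀ hγ₁ hd₂ hd₂₁ hr
  rw [ret, ret, ← hs₁.tsum_sub hs₂, ← hbound.tsum_eq]
  exact (hs₁.sub hs₂).tsum_le_tsum hterm hbound.summable

end DiscountedReturn

theorem mbpo_performance_bound_general
    {S A : Type*} [Fintype S] [Fintype A]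
    (p phat : S × A → PMF S) (πD π : S → PMF A) (ρ0 : PMF S)
    (r : S × A → ℝ) (rmax : ℝ) (hrmax : 0 ≤ rmax) (hr : ∀ sa : S × A, |r sa| ≤ rmax)
    (γ : ℝ) (hγ0 : 0 < γ) (hγ1 : γ < 1) (εm επ : ℝ)
    (hεm : ∀ t : ℕ, ∑ sa : S × A,
      marginal ρ0 (fun _ => πD) (fun _ => p) t sa * tv (p sa) (phat sa) ≤ εm)
    (hεπ : ∀ s : S, tv (πD s) (π s) ≤ επ) :
    ret γ r (marginal ρ0 (fun _ => π) (fun _ => p)) ≥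
      ret γ r (marginal ρ0 (fun _ => π) (fun _ => phat)) -
        (2 * γ * rmax * (εm + 2 * επ) / (1 - γ) ^ 2 + 4 * rmax * επ / (1 - γ)) := by
  set d := marginal ρ0 (fun _ => π) (fun _ => p)
  set dhat := marginal ρ0 (fun _ => π) (fun _ => phat)
  set dD := marginal ρ0 (fun _ => πD) (fun _ => p)
  set dDhat := marginal ρ0 (fun _ => πD) (fun _ => phat)
  have hsame {p' : S × A → PMF S} {π' : S → PMF A} (t : ℕ) :
      ∑ sa, marginal ρ0 (fun _ => π') (fun _ => p') t sa * tv (p' sa) (p' sa) ≤ 0 := by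
    simp [tv_self]
  have hmodel : ∀ t, tvFun (dD t) (dDhat t) ≤ _ :=
    tvFun_marginal_le ρ0 (fun _ s => (tv_self (πD s)).le) hεm
  have hpolicy_model : ∀ t, tvFun (dhat t) (dDhat t) ≤ _ :=
    tvFun_marginal_le ρ0 (fun _ s => (tv_comm (π s) (πD s)).trans_le (hεπ s)) hsame
  have hpolicy_true : ∀ t, tvFun (dD t) (d t) ≤ _ :=
    tvFun_marginal_le ρ0 (fun _ => hεπ) hsame
  have hshift (t : ℕ) : tvFun (dhat t) (d t) ≤ 2 * επ + (2 * επ + εm) * t := by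
    have h₁ := tvFun_triangle (dhat t) (dDhat t) (d t)
    have h₂ := tvFun_triangle (dDhat t) (dD t) (d t)
    linarith [tvFun_comm (dD t) (dDhat t), hmodel t, hpolicy_model t, hpolicy_true t]
  have hret := ret_sub_ret_le hγ0.le hγ1 hrmax hr (marginal_nonneg ρ0 _ _)
    (sum_marginal ρ0 _ _) (marginal_nonneg ρ0 _ _) (sum_marginal ρ0 _ _) hshift
  have hγ' : 1 - γ ≠ 0 := by linarith
  rw [ge_iff_le, sub_le_comm]
  convert hret using 1
  field_simp
  ring

/-- MBPO performance bound (Theorem A.1 / Theorem 4.1). -/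
theorem mbpo_performance_bound
    {S A : Type*} [Fintype S] [Fintype A] [Nonempty S] [Nonempty A]
    (p phat : S × A → PMF S) (πD π : S → PMF A) (ρ0 : PMF S)
    (r : S × A → ℝ) (rmax : ℝ) (hrmax : 0 ≤ rmax) (hr : ∀ sa : S × A, |r sa| ≤ rmax)
    (γ : ℝ) (hγ0 : 0 < γ) (hγ1 : γ < 1) (εm επ : ℝ)
    (hεm : ∀ t : ℕ, ∑ sa : S × A,
      marginal ρ0 (fun _ => πD) (fun _ => p) t sa * tv (p sa) (phat sa) ≤ εm)
    (hεπ : ∀ s : S, tv (πD s) (π s) ≤ επ) :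
    ret γ r (marginal ρ0 (fun _ => π) (fun _ => p)) ≥
      ret γ r (marginal ρ0 (fun _ => π) (fun _ => phat)) -
        (2 * γ * rmax * (εm + 2 * επ) / (1 - γ) ^ 2 + 4 * rmax * επ / (1 - γ)) :=
  mbpo_performance_bound_general p phat πD π ρ0 r rmax hrmax hr γ hγ0 hγ1 εm επ hεm hεπ
end

section
/- Let S be a finite nonempty set, let p1(·|s) and p2(·|s) be two Markov transition kernels on S, and let both chains start from the same initial state distribution, i.e. p1^0 = p2^0. Define the time-t state marginals recursively by p_i^t(s) = Σ_{s'} p_i(s|s')·p_i^{t−1}(s'). If for every timestep t one has E_{s∼p1^t}[ TV(p1(·|s), p2(·|s)) ] ≤ δ, then for every t, TV(p1^t, p2^t) ≤ t·δ. -/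
open scoped BigOperators

/-- Time-`t` state marginal of a Markov chain with kernel `p` and initial distribution `q0`. -/
noncomputable def chainMarginal {S : Type*} [Fintype S] (p : S → PMF S) (q0 : PMF S) :
    ℕ → S → ℝ
  | 0 => fun s => (q0 s).toReal
  | t + 1 => fun s => ∑ s' : S, ((p s') s).toReal * chainMarginal p q0 t s'

/-!
Couple the two chains one step at a time: `p1^{t+1}` and `p2^{t+1}` differ either because
the kernels differ at the current state, which costs `E_{s∼p1^t} TV(p1(·|s), p2(·|s)) ≤ δ`,
or because the marginals already differed, which costs `TV(p1^t, p2^t)` since a stochastic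
kernel does not increase total variation. Summing over the `t` steps gives `t·δ`.
-/

lemma PMF.sum_toReal_eq_one {X : Type*} [Fintype X] (q : PMF X) : ∑ x, (q x).toReal = 1 := by
  rw [← ENNReal.toReal_sum fun x _ => q.apply_ne_top x, ← ENNReal.toReal_one, ← q.tsum_coe,
    tsum_fintype]

lemma chainMarginal_nonneg {S : Type*} [Fintype S] (p : S → PMF S) (q0 : PMF S) (t : ℕ) :
    0 ≤ chainMarginal p q0 t := by
  induction t with
  | zero => exact fun s => ENNReal.toReal_nonneg
  | succ t ih =>
    exact fun s => Finset.sum_nonneg fun s' _ => mul_nonneg ENNReal.toReal_nonneg (ih s')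

lemma abs_mul_sub_mul_le {a b x y : ℝ} (hb : 0 ≤ b) (hx : 0 ≤ x) :
    |a * x - b * y| ≤ x * |a - b| + b * |x - y| := by
  calc |a * x - b * y| = |(a - b) * x + b * (x - y)| := by ring_nf
    _ ≤ |(a - b) * x| + |b * (x - y)| := abs_add_le _ _
    _ = x * |a - b| + b * |x - y| := by
      rw [abs_mul, abs_mul, abs_of_nonneg hx, abs_of_nonneg hb, mul_comm]

lemma tvFun_sum_kernel_le {X Y : Type*} [Fintype X] [Fintype Y] (k1 k2 : X → PMF Y)
    (d1 d2 : X → ℝ) (hd1 : 0 ≤ d1) :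
    tvFun (fun y => ∑ x, (k1 x y).toReal * d1 x) (fun y => ∑ x, (k2 x y).toReal * d2 x)
      ≤ ∑ x, d1 x * tv (k1 x) (k2 x) + tvFun d1 d2 := by
  have hpoint : ∀ y, |∑ x, (k1 x y).toReal * d1 x - ∑ x, (k2 x y).toReal * d2 x|
      ≤ ∑ x, (d1 x * |(k1 x y).toReal - (k2 x y).toReal| + (k2 x y).toReal * |d1 x - d2 x|) :=
    fun y => by
      rw [← Finset.sum_sub_distrib]
      exact (Finset.abs_sum_le_sum_abs _ _).trans <| Finset.sum_le_sum fun x _ =>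
        abs_mul_sub_mul_le ENNReal.toReal_nonneg (hd1 x)
  calc tvFun (fun y => ∑ x, (k1 x y).toReal * d1 x) (fun y => ∑ x, (k2 x y).toReal * d2 x)
      ≤ 1 / 2 * ∑ y, ∑ x,
          (d1 x * |(k1 x y).toReal - (k2 x y).toReal| + (k2 x y).toReal * |d1 x - d2 x|) :=
        mul_le_mul_of_nonneg_left (Finset.sum_le_sum fun y _ => hpoint y) (by norm_num)
    _ = ∑ x, d1 x * tv (k1 x) (k2 x)
          + 1 / 2 * ∑ x, (∑ y, (k2 x y).toReal) * |d1 x - d2 x| := by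
      simp only [Finset.sum_comm (γ := Y), Finset.sum_add_distrib, ← Finset.sum_mul,
        mul_add, tv, Finset.mul_sum]
      ring_nf
    _ = ∑ x, d1 x * tv (k1 x) (k2 x) + tvFun d1 d2 := by
      simp only [PMF.sum_toReal_eq_one, one_mul, tvFun]

theorem markov_chain_tvd_bound_general
    {S : Type*} [Fintype S]
    (p1 p2 : S → PMF S) (q0 : PMF S) (δ : ℝ)
    (hδ : ∀ t : ℕ, ∑ s : S, chainMarginal p1 q0 t s * tv (p1 s) (p2 s) ≤ δ) :
    ∀ t : ℕ, tvFun (chainMarginal p1 q0 t) (chainMarginal p2 q0 t) ≤ (t : ℝ) * δ := by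
  intro t
  induction t with
  | zero => simp [tvFun, chainMarginal]
  | succ t ih =>
    calc tvFun (chainMarginal p1 q0 (t + 1)) (chainMarginal p2 q0 (t + 1))
        ≤ ∑ s, chainMarginal p1 q0 t s * tv (p1 s) (p2 s)
            + tvFun (chainMarginal p1 q0 t) (chainMarginal p2 q0 t) :=
          tvFun_sum_kernel_le p1 p2 _ _ (chainMarginal_nonneg p1 q0 t)
      _ ≤ δ + t * δ := add_le_add (hδ t) ih
      _ = (t + 1 : ℕ) * δ := by push_cast; ring

/-- Markov chain TVD bound, time-varying (Lemma B.2). -/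
theorem markov_chain_tvd_bound
    {S : Type*} [Fintype S] [Nonempty S]
    (p1 p2 : S → PMF S) (q0 : PMF S) (δ : ℝ)
    (hδ : ∀ t : ℕ, ∑ s : S, chainMarginal p1 q0 t s * tv (p1 s) (p2 s) ≤ δ) :
    ∀ t : ℕ, tvFun (chainMarginal p1 q0 t) (chainMarginal p2 q0 t) ≤ (t : ℝ) * δ :=
  markov_chain_tvd_bound_general p1 p2 q0 δ hδ
end

section
/- Let S be a finite nonempty set, let p1(·|s) and p2(·|s) be two Markov transition kernels on S, and let p1^{t−1}, p2^{t−1} be any two probability distributions on S, with p_i^t(s) = Σ_{s'} p_i(s|s')·p_i^{t−1}(s'). Then the one-step total variation recursion holds: TV(p1^t, p2^t) ≤ TV(p1^{t−1}, p2^{t−1}) + E_{s'∼p1^{t−1}}[ TV(p1(·|s'), p2(·|s')) ]. -/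
open scoped BigOperators

/-- One-step total variation recursion for Markov kernels. -/
theorem markov_one_step_tvd
    {S : Type*} [Fintype S] [Nonempty S]
    (p1 p2 : S → PMF S) (q1 q2 : PMF S) :
    tvFun (fun s : S => ∑ s' : S, ((p1 s') s).toReal * (q1 s').toReal)
        (fun s : S => ∑ s' : S, ((p2 s') s).toReal * (q2 s').toReal) ≤
      tv q1 q2 + ∑ s' : S, (q1 s').toReal * tv (p1 s') (p2 s') := by

  have hsum : ∀ p : PMF S, ∑ s : S, (p s).toReal = 1 := by
    intro p
    have h := p.tsum_coe
    rw [tsum_fintype] at h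
    rw [← ENNReal.toReal_sum (fun a _ => PMF.apply_ne_top p a), h, ENNReal.toReal_one]
  have hnn : ∀ (p : PMF S) (s : S), 0 ≤ (p s).toReal := fun p s => ENNReal.toReal_nonneg
  simp only [tvFun, tv]
  have key : ∀ s : S,
      |∑ s' : S, ((p1 s') s).toReal * (q1 s').toReal -
        ∑ s' : S, ((p2 s') s).toReal * (q2 s').toReal| ≤
      (∑ s' : S, |((p1 s') s).toReal - ((p2 s') s).toReal| * (q1 s').toReal) +
      ∑ s' : S, ((p2 s') s).toReal * |(q1 s').toReal - (q2 s').toReal| := by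
    intro s
    rw [← Finset.sum_sub_distrib]
    refine (Finset.abs_sum_le_sum_abs _ _).trans ?_
    rw [← Finset.sum_add_distrib]
    refine Finset.sum_le_sum fun s' _ => ?_
    have h1 : ((p1 s') s).toReal * (q1 s').toReal - ((p2 s') s).toReal * (q2 s').toReal
        = (((p1 s') s).toReal - ((p2 s') s).toReal) * (q1 s').toReal
          + ((p2 s') s).toReal * ((q1 s').toReal - (q2 s').toReal) := by ring
    rw [h1]
    refine (abs_add_le _ _).trans ?_
    rw [abs_mul, abs_mul, abs_of_nonneg (hnn q1 s'), abs_of_nonneg (hnn (p2 s') s)]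
  have step1 : (1/2 : ℝ) * ∑ s : S, |∑ s' : S, ((p1 s') s).toReal * (q1 s').toReal -
        ∑ s' : S, ((p2 s') s).toReal * (q2 s').toReal|
      ≤ (1/2 : ℝ) * ∑ s : S,
          ((∑ s' : S, |((p1 s') s).toReal - ((p2 s') s).toReal| * (q1 s').toReal) +
          ∑ s' : S, ((p2 s') s).toReal * |(q1 s').toReal - (q2 s').toReal|) :=
    mul_le_mul_of_nonneg_left (Finset.sum_le_sum fun s _ => key s) (by norm_num)
  have e1 : (1/2 : ℝ) * ∑ s : S, ∑ s' : S, |((p1 s') s).toReal - ((p2 s') s).toReal| * (q1 s').toReal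
      = ∑ s' : S, (q1 s').toReal * ((1/2 : ℝ) * ∑ s : S, |((p1 s') s).toReal - ((p2 s') s).toReal|) := by
    rw [Finset.sum_comm, Finset.mul_sum]
    exact Finset.sum_congr rfl fun s' _ => by rw [← Finset.sum_mul]; ring
  have e2 : (1/2 : ℝ) * ∑ s : S, ∑ s' : S, ((p2 s') s).toReal * |(q1 s').toReal - (q2 s').toReal|
      = (1/2 : ℝ) * ∑ s' : S, |(q1 s').toReal - (q2 s').toReal| := by
    rw [Finset.sum_comm]
    congr 1
    refine Finset.sum_congr rfl fun s' _ => ?_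
    rw [← Finset.sum_mul, hsum (p2 s'), one_mul]
  calc _ ≤ _ := step1
    _ = _ + _ := by rw [Finset.sum_add_distrib, mul_add]
    _ ≤ _ := by rw [e1, e2, add_comm]
end
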